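/- arXiv:1802.06330 — 5 statements merged into one kernel-verified Lean document; each statement's English description precedes it below -/
import Mathlib

section
/- If A is a divisibility monoid containing a non-invertible element, then F(A) has no terminal object. -/
open Finset

/-- A function `f : [M] → [N]` is divisibility-constrained by tuples `x`, `y` when
`x n` divides the product of `y` over the fiber `f⁻¹(n)`; these are the morphisms
`(x_n) → (y_m)` in the category of factorization of a divisibility monoid. -/
def DivConstrained {A : Type*} [CommMonoid A] {N M : ℕ} (x : Fin N → A) (y : Fin M → A)
    (f : Fin M → Fin N) : Prop :=
  ∀ n : Fin N, x n ∣ ∏ m ∈ Finset.univ.filter (fun m => f m = n), y m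

/-- A morphism is a weak equivalence when, for each `n`, the element `r` with
`r * x n = ∏_{m ∈ f⁻¹(n)} y m` is invertible. -/
def IsWeakEquiv {A : Type*} [CommMonoid A] {N M : ℕ} (x : Fin N → A) (y : Fin M → A)
    (f : Fin M → Fin N) : Prop :=
  ∀ (n : Fin N) (r : A), r * x n = ∏ m ∈ Finset.univ.filter (fun m => f m = n), y m → IsUnit r

theorem isUnit_of_mul_self_dvd {α : Type*} [CommMonoid α] [IsLeftCancelMul α] {z : α}
    (h : z * z ∣ z) : IsUnit z := by
  obtain ⟨c, hc⟩ := h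
  rw [mul_assoc, eq_comm, mul_eq_left] at hc
  exact IsUnit.of_mul_eq_one c hc

theorem isUnit_of_forall_dvd {α : Type*} [CommMonoid α] [IsLeftCancelMul α] {z : α}
    (hz : ∀ b, b ∣ z) (b : α) : IsUnit b :=
  isUnit_of_dvd_unit (hz b) (isUnit_of_mul_self_dvd (hz (z * z)))

theorem divConstrained_fin_one_iff {A : Type*} [CommMonoid A] {M : ℕ} (x : Fin 1 → A)
    (y : Fin M → A) (f : Fin M → Fin 1) : DivConstrained x y f ↔ x 0 ∣ ∏ m, y m := by
  simp [DivConstrained, Subsingleton.elim _ (0 : Fin 1)]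

/-- If a divisibility monoid has a non-invertible element, then F(A) has no
terminal object. -/
theorem stmt6 (A : Type*) [CancelCommMonoid A] (a : A) (ha : ¬ IsUnit a) :
    ¬ ∃ (P : ℕ) (z : Fin P → A),
        ∀ (N : ℕ) (x : Fin N → A), ∃! f : Fin P → Fin N, DivConstrained x z f := by
  rintro ⟨P, z, hterminal⟩
  have hdvd : ∀ b : A, b ∣ ∏ m, z m := fun b => by
    obtain ⟨f, hf, -⟩ := hterminal 1 (fun _ => b)
    exact (divConstrained_fin_one_iff _ z f).1 hf
  exact ha (isUnit_of_forall_dvd hdvd a)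
end

section
/- Let A be a divisibility monoid and f̂ : (x_n) → (y_m) a morphism in F(A). The underlying function f : [M] → [N] is injective if and only if the morphism f̂ is an epimorphism in F(A). -/
/-!
If `f m₁ = f m₂`, the two maps `[M + 1] → [M]` that are the identity on `[M]` and send the
extra index to `m₁`, resp. `m₂`, are morphisms `(y_m) → (y_1, …, y_M, 1)` which `f̂` does not
separate; so an epimorphism has injective underlying map. The converse is cancellation of
an injective map on the left.
-/

open Finset

theorem divConstrained_of_leftInverse {A : Type*} [CommMonoid A] {M P : ℕ} {y : Fin M → A}
    {z : Fin P → A} {g : Fin P → Fin M} {i : Fin M → Fin P} (hgi : Function.LeftInverse g i)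
    (hz : ∀ m, z (i m) = y m) : DivConstrained y z g := by
  intro m
  rw [← hz m]
  exact dvd_prod_of_mem z (by simp [hgi m])

theorem divConstrained_snoc_id {A : Type*} [CommMonoid A] {M : ℕ} (y : Fin M → A) (m : Fin M) :
    DivConstrained y (Fin.snoc y 1) (Fin.snoc id m : Fin (M + 1) → Fin M) :=
  divConstrained_of_leftInverse (i := Fin.castSucc) (fun _ => Fin.snoc_castSucc ..)
    (fun _ => Fin.snoc_castSucc ..)

theorem stmt8_general (A : Type*) [CancelCommMonoid A] {N M : ℕ}
    (y : Fin M → A) (f : Fin M → Fin N) :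
    Function.Injective f ↔
      ∀ (P : ℕ) (z : Fin P → A) (g h : Fin P → Fin M),
        DivConstrained y z g → DivConstrained y z h →
        f ∘ g = f ∘ h → g = h := by
  refine ⟨fun hinj _ _ _ _ _ _ hgh => hinj.comp_left hgh, fun hepi m₁ m₂ hm => ?_⟩
  have hsnoc := hepi (M + 1) (Fin.snoc y 1) (Fin.snoc id m₁) (Fin.snoc id m₂)
    (divConstrained_snoc_id y m₁) (divConstrained_snoc_id y m₂)
    (by rw [Fin.comp_snoc, Fin.comp_snoc, hm])
  simpa using congrFun hsnoc (Fin.last M)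

/-- `f` is injective iff `f̂` is an epimorphism in F(A). -/
theorem stmt8 (A : Type*) [CancelCommMonoid A] {N M : ℕ}
    (x : Fin N → A) (y : Fin M → A) (f : Fin M → Fin N)
    (hf : DivConstrained x y f) :
    Function.Injective f ↔
      ∀ (P : ℕ) (z : Fin P → A) (g h : Fin P → Fin M),
        DivConstrained y z g → DivConstrained y z h →
        f ∘ g = f ∘ h → g = h :=
  stmt8_general A y f
end

section
/- Let A be a divisibility monoid and f̂ : (x_n) → (y_m) a morphism in F(A). The underlying function f : [M] → [N] is surjective if and only if the morphism f̂ is a monomorphism in F(A). -/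
open Finset

/-! Every map `[N] → [Q]` is a morphism out of the object `(1, …, 1)`, so testing monicity of
`f̂` against such objects with `Q = 2` reduces it to right cancellability of `f` in sets. -/

theorem Function.surjective_of_right_cancellable_fin_two {α β : Type*} {f : α → β}
    (h : ∀ g₁ g₂ : β → Fin 2, g₁ ∘ f = g₂ ∘ f → g₁ = g₂) : Function.Surjective f :=
  Function.surjective_of_right_cancellable_Prop fun p q hpq => by
    let e : Prop ≃ Fin 2 := Equiv.propEquivBool.trans finTwoEquiv.symm
    exact e.injective.comp_left (h (e ∘ p) (e ∘ q) (by rw [Function.comp_assoc, hpq]; rfl))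

theorem divConstrained_one {A : Type*} [CommMonoid A] {N Q : ℕ} (x : Fin N → A)
    (g : Fin N → Fin Q) : DivConstrained (fun _ => 1) x g :=
  fun _ => one_dvd _

theorem stmt9_general (A : Type*) [CancelCommMonoid A] {N M : ℕ}
    (x : Fin N → A) (f : Fin M → Fin N) :
    Function.Surjective f ↔
      ∀ (Q : ℕ) (w : Fin Q → A) (g h : Fin N → Fin Q),
        DivConstrained w x g → DivConstrained w x h →
        g ∘ f = h ∘ f → g = h :=
  ⟨fun hf _ _ _ _ _ _ hgh => hf.injective_comp_right hgh,
    fun hmono => Function.surjective_of_right_cancellable_fin_two fun g₁ g₂ =>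
      hmono 2 (fun _ => 1) g₁ g₂ (divConstrained_one x g₁) (divConstrained_one x g₂)⟩

/-- `f` is surjective iff `f̂` is a monomorphism in F(A). -/
theorem stmt9 (A : Type*) [CancelCommMonoid A] {N M : ℕ}
    (x : Fin N → A) (y : Fin M → A) (f : Fin M → Fin N)
    (hf : DivConstrained x y f) :
    Function.Surjective f ↔
      ∀ (Q : ℕ) (w : Fin Q → A) (g h : Fin N → Fin Q),
        DivConstrained w x g → DivConstrained w x h →
        g ∘ f = h ∘ f → g = h :=
  stmt9_general A x f
end

section
/- Let A be a divisibility monoid and r ∈ A. The following are equivalent: (i) r is invertible in A; (ii) every morphism f̂ : (x_n) → (y_m) in F(A) with r · ∏_n x_n = ∏_m y_m is a weak equivalence; (iii) some morphism f̂ : (x_n) → (y_m) with r · ∏_n x_n = ∏_m y_m is a weak equivalence. -/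
open Finset

/-!
Write `c n * x n = ∏_{f m = n} y m` for the cofactors of a morphism `f : (x_n) → (y_m)`.
Multiplying over `n` gives `(∏ c) * ∏ x = ∏ y = r * ∏ x`, so by cancellation `r = ∏ c`,
and a product in a commutative monoid is a unit exactly when every factor is. Hence for a
single morphism with `r * ∏ x = ∏ y`, being a weak equivalence is equivalent to `r` being a
unit, and the morphism `(1) → (r)` shows that such a morphism always exists.
-/

namespace DivConstrained

variable {A : Type*} {N M : ℕ} {x : Fin N → A} {y : Fin M → A} {f : Fin M → Fin N}

theorem exists_cofactors [CommMonoid A] (hf : DivConstrained x y f) :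
    ∃ c : Fin N → A, ∀ n, c n * x n = ∏ m ∈ univ.filter (fun m => f m = n), y m := by
  choose c hc using hf
  exact ⟨c, fun n => by rw [hc n, mul_comm]⟩

variable [CancelCommMonoid A]

theorem eq_prod_cofactors {r : A} {c : Fin N → A}
    (hc : ∀ n, c n * x n = ∏ m ∈ univ.filter (fun m => f m = n), y m)
    (hr : r * ∏ n, x n = ∏ m, y m) : r = ∏ n, c n := by
  refine mul_right_cancel (b := ∏ n, x n) ?_
  rw [hr, ← prod_mul_distrib, ← prod_fiberwise univ f y]
  exact (prod_congr rfl fun n _ => hc n).symm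

theorem isWeakEquiv_iff_forall_isUnit {c : Fin N → A}
    (hc : ∀ n, c n * x n = ∏ m ∈ univ.filter (fun m => f m = n), y m) :
    IsWeakEquiv x y f ↔ ∀ n, IsUnit (c n) := by
  refine ⟨fun hw n => hw n (c n) (hc n), fun hu n s hs => ?_⟩
  rw [mul_right_cancel (hs.trans (hc n).symm)]
  exact hu n

theorem isWeakEquiv_iff_isUnit (hf : DivConstrained x y f) {r : A}
    (hr : r * ∏ n, x n = ∏ m, y m) : IsWeakEquiv x y f ↔ IsUnit r := by
  obtain ⟨c, hc⟩ := hf.exists_cofactors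
  rw [isWeakEquiv_iff_forall_isUnit hc, eq_prod_cofactors hc hr, IsUnit.prod_univ_iff]

end DivConstrained

theorem divConstrained_one_const {A : Type*} [CommMonoid A] (r : A) :
    DivConstrained (fun _ : Fin 1 => (1 : A)) (fun _ : Fin 1 => r) id :=
  fun _ => one_dvd _

/-- `r` is invertible iff every morphism with associated element `r` is a weak
equivalence, iff some morphism with associated element `r` is a weak equivalence. -/
theorem stmt11 (A : Type*) [CancelCommMonoid A] (r : A) :
    (IsUnit r ↔
      ∀ (N M : ℕ) (x : Fin N → A) (y : Fin M → A) (f : Fin M → Fin N),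
        DivConstrained x y f → r * ∏ n, x n = ∏ m, y m → IsWeakEquiv x y f) ∧
    (IsUnit r ↔
      ∃ (N M : ℕ) (x : Fin N → A) (y : Fin M → A) (f : Fin M → Fin N),
        DivConstrained x y f ∧ r * ∏ n, x n = ∏ m, y m ∧ IsWeakEquiv x y f) := by
  have hd := divConstrained_one_const r
  have hp : r * ∏ _n : Fin 1, (1 : A) = ∏ _m : Fin 1, r := by simp
  refine ⟨⟨fun hr N M x y f hf hrf => (hf.isWeakEquiv_iff_isUnit hrf).2 hr, fun h => ?_⟩,
    ⟨fun hr => ⟨1, 1, _, _, id, hd, hp, (hd.isWeakEquiv_iff_isUnit hp).2 hr⟩, ?_⟩⟩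
  · exact (hd.isWeakEquiv_iff_isUnit hp).1 (h 1 1 _ _ id hd hp)
  · rintro ⟨N, M, x, y, f, hf, hrf, hw⟩
    exact (hf.isWeakEquiv_iff_isUnit hrf).1 hw
end

section
/- Let A be a divisibility monoid and r ∈ A. The following are equivalent: (i) r is irreducible in A; (ii) every morphism f̂ : (x_n) → (y_m) in F(A) with r·∏x_n = ∏y_m is weakly irreducible; (iii) the morphism (1) → (r) is weakly irreducible; (iv) some morphism f̂ : (x_n) → (y_m) with r·∏x_n = ∏y_m is weakly irreducible. -/
/-!
Every morphism `f̂ : (x_n) → (y_m)` carries fiberwise cofactors `s n` with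
`s n * x n = ∏_{f m = n} y m`, and by cancellation its associated element is `r = ∏ n, s n`;
`f̂` is a weak equivalence exactly when `r` is a unit. A factorization `f̂ = ĝ ∘ ĥ` splits `r`
as the product of the associated elements of `ĝ` and `ĥ`, so irreducibility of `r` makes `f̂`
weakly irreducible. Conversely, every pointwise splitting `s = t * u` is realized by the
factorization through `(t n * x n)_n`, so weak irreducibility of `f̂` forces all but one `s n`
to be units and the remaining one to be irreducible; hence `r` is irreducible.
-/

open Finset

/-- A morphism is weakly irreducible when it is not a weak equivalence and in
every factorization `f̂ = ĝ ∘ ĥ` one of the factors is a weak equivalence. -/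
def WeaklyIrred {A : Type*} [CommMonoid A] {N M : ℕ} (x : Fin N → A) (y : Fin M → A)
    (f : Fin M → Fin N) : Prop :=
  ¬ IsWeakEquiv x y f ∧
    ∀ (P : ℕ) (z : Fin P → A) (h : Fin P → Fin N) (g : Fin M → Fin P),
      DivConstrained x z h → DivConstrained z y g → h ∘ g = f →
      IsWeakEquiv x z h ∨ IsWeakEquiv z y g

lemma irreducible_prod_of_forall_mul_eq {M ι : Type*} [CommMonoid M] [Fintype ι]
    [DecidableEq ι] {s : ι → M} (hs : ¬IsUnit (∏ i, s i))
    (hsplit : ∀ t u : ι → M, t * u = s → (∀ i, IsUnit (t i)) ∨ ∀ i, IsUnit (u i)) :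
    Irreducible (∏ i, s i) := by
  obtain ⟨i₀, hi₀⟩ : ∃ i, ¬IsUnit (s i) := by
    contrapose! hs
    exact IsUnit.prod_univ_iff.mpr hs
  have key : ∀ a b, s i₀ = a * b → IsUnit a ∨ IsUnit b ∧ ∀ i ≠ i₀, IsUnit (s i) := by
    intro a b hab
    have hmul : Pi.mulSingle i₀ a * Function.update s i₀ b = s := by
      funext i
      by_cases hi : i = i₀
      · subst hi; simp [hab]
      · simp [hi]
    refine (hsplit _ _ hmul).imp (fun h => by simpa using h i₀) fun h => ⟨by simpa using h i₀, ?_⟩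
    intro i hi
    simpa [hi] using h i
  have hrest : ∀ i ≠ i₀, IsUnit (s i) := ((key _ 1 (mul_one _).symm).resolve_left hi₀).2
  have hirr : Irreducible (s i₀) := ⟨hi₀, fun a b hab => (key a b hab).imp_right And.left⟩
  rw [← mul_prod_erase _ _ (mem_univ i₀), irreducible_mul_isUnit]
  · exact hirr
  · exact IsUnit.prod_iff.mpr fun i hi => hrest i (ne_of_mem_erase hi)

section Cofactors

variable {A : Type*} {N M : ℕ} {x : Fin N → A} {y : Fin M → A} {f : Fin M → Fin N}
  {s : Fin N → A}

section CommMonoid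

variable [CommMonoid A]

lemma DivConstrained.exists_cofactors_s17 (hd : DivConstrained x y f) :
    ∃ s : Fin N → A, ∀ n, s n * x n = ∏ m ∈ univ.filter (fun m => f m = n), y m := by
  choose c hc using hd
  exact ⟨c, fun n => by rw [mul_comm, ← hc n]⟩

lemma divConstrained_of_cofactors
    (hs : ∀ n, s n * x n = ∏ m ∈ univ.filter (fun m => f m = n), y m) :
    DivConstrained x y f :=
  fun n => Dvd.intro_left _ (hs n)

lemma prod_cofactors_mul_prod
    (hs : ∀ n, s n * x n = ∏ m ∈ univ.filter (fun m => f m = n), y m) :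
    (∏ n, s n) * ∏ n, x n = ∏ m, y m := by
  rw [← prod_mul_distrib, Fintype.prod_congr _ _ hs]
  exact prod_fiberwise_of_maps_to (fun m _ => mem_univ (f m)) y

end CommMonoid

variable [CancelCommMonoid A]

lemma isWeakEquiv_iff_forall_isUnit
    (hs : ∀ n, s n * x n = ∏ m ∈ univ.filter (fun m => f m = n), y m) :
    IsWeakEquiv x y f ↔ ∀ n, IsUnit (s n) := by
  refine ⟨fun hw n => hw n (s n) (hs n), fun hu n t ht => ?_⟩
  rw [mul_right_cancel (ht.trans (hs n).symm)]
  exact hu n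

lemma isWeakEquiv_iff_isUnit (hd : DivConstrained x y f) {r : A}
    (hr : r * ∏ n, x n = ∏ m, y m) : IsWeakEquiv x y f ↔ IsUnit r := by
  obtain ⟨s, hs⟩ := hd.exists_cofactors_s17
  rw [isWeakEquiv_iff_forall_isUnit hs,
    mul_right_cancel (hr.trans (prod_cofactors_mul_prod hs).symm), IsUnit.prod_univ_iff]

lemma weaklyIrred_of_irreducible {r : A} (hr : Irreducible r) (hd : DivConstrained x y f)
    (he : r * ∏ n, x n = ∏ m, y m) : WeaklyIrred x y f := by
  refine ⟨fun hw => hr.not_isUnit ((isWeakEquiv_iff_isUnit hd he).mp hw), ?_⟩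
  intro P z h g hxz hzy _
  obtain ⟨s₁, hs₁⟩ := hxz.exists_cofactors_s17
  obtain ⟨s₂, hs₂⟩ := hzy.exists_cofactors_s17
  have e₁ := prod_cofactors_mul_prod hs₁
  have e₂ := prod_cofactors_mul_prod hs₂
  have hsplit : r = (∏ n, s₁ n) * ∏ p, s₂ p := by
    refine mul_right_cancel (he.trans ?_)
    rw [← e₂, ← e₁]
    ac_rfl
  exact (hr.isUnit_or_isUnit hsplit).imp (isWeakEquiv_iff_isUnit hxz e₁).mpr
    (isWeakEquiv_iff_isUnit hzy e₂).mpr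

lemma WeaklyIrred.forall_isUnit_or_forall_isUnit (hw : WeaklyIrred x y f)
    (hs : ∀ n, s n * x n = ∏ m ∈ univ.filter (fun m => f m = n), y m)
    (t u : Fin N → A) (htu : t * u = s) : (∀ n, IsUnit (t n)) ∨ ∀ n, IsUnit (u n) := by
  let z : Fin N → A := fun n => t n * x n
  have ht : ∀ n, t n * x n = ∏ p ∈ univ.filter (fun p => id p = n), z p := by
    simp only [id, filter_eq', mem_univ, if_true, prod_singleton, z, implies_true]
  have hu : ∀ n, u n * z n = ∏ m ∈ univ.filter (fun m => f m = n), y m := by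
    intro n
    rw [← hs n, ← htu, Pi.mul_apply]
    change u n * (t n * x n) = _
    rw [mul_left_comm, ← mul_assoc]
  exact (hw.2 N z id f (divConstrained_of_cofactors ht) (divConstrained_of_cofactors hu)
    rfl).imp (isWeakEquiv_iff_forall_isUnit ht).mp (isWeakEquiv_iff_forall_isUnit hu).mp

lemma irreducible_of_weaklyIrred {r : A} (hd : DivConstrained x y f)
    (he : r * ∏ n, x n = ∏ m, y m) (hw : WeaklyIrred x y f) : Irreducible r := by
  obtain ⟨s, hs⟩ := hd.exists_cofactors_s17
  have hrs : r = ∏ n, s n := mul_right_cancel (he.trans (prod_cofactors_mul_prod hs).symm)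
  have hnu : ¬IsUnit r := fun hu => hw.1 ((isWeakEquiv_iff_isUnit hd he).mpr hu)
  rw [hrs] at hnu ⊢
  exact irreducible_prod_of_forall_mul_eq hnu (hw.forall_isUnit_or_forall_isUnit hs)

end Cofactors

/-- `r` is irreducible in `A` iff every (equivalently, some) morphism with
associated element `r` is weakly irreducible, iff the morphism `(1) → (r)` is
weakly irreducible. -/
theorem stmt17 (A : Type*) [CancelCommMonoid A] (r : A) :
    (Irreducible r ↔
      ∀ (N M : ℕ) (x : Fin N → A) (y : Fin M → A) (f : Fin M → Fin N),
        DivConstrained x y f → r * ∏ n, x n = ∏ m, y m → WeaklyIrred x y f) ∧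
    (Irreducible r ↔
      WeaklyIrred (fun _ : Fin 1 => (1 : A)) (fun _ : Fin 1 => r) id) ∧
    (Irreducible r ↔
      ∃ (N M : ℕ) (x : Fin N → A) (y : Fin M → A) (f : Fin M → Fin N),
        DivConstrained x y f ∧ r * ∏ n, x n = ∏ m, y m ∧ WeaklyIrred x y f) := by
  have hd : DivConstrained (fun _ : Fin 1 => (1 : A)) (fun _ : Fin 1 => r) id :=
    fun _ => one_dvd _
  have he : r * ∏ _n : Fin 1, (1 : A) = ∏ _m : Fin 1, r := by simp
  refine ⟨⟨fun hr _ _ _ _ _ => weaklyIrred_of_irreducible hr,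
      fun h => irreducible_of_weaklyIrred hd he (h 1 1 _ _ id hd he)⟩,
    ⟨fun hr => weaklyIrred_of_irreducible hr hd he, irreducible_of_weaklyIrred hd he⟩,
    ⟨fun hr => ⟨1, 1, _, _, id, hd, he, weaklyIrred_of_irreducible hr hd he⟩, ?_⟩⟩
  rintro ⟨N, M, x, y, f, hd', he', hw⟩
  exact irreducible_of_weaklyIrred hd' he' hw
end
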